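/- arXiv:1511.05192 — 2 statements merged into one kernel-verified Lean document; each statement's English description precedes it below -/
import Mathlib

section
/- For all λ > 0, μ > 0, every integer k ≥ 1 and every t > 0, the density of the first-hitting time of state k for the iterated Poisson process satisfies Σ_{j=0}^{k-1} p_j(t) · λ e^{-μ} μ^{k-j}/(k-j)! = (e^{-μ} μ^k/k!) λ e^{-λ(1-e^{-μ})t} · [B_{k+1}(λ e^{-μ} t)/(λ e^{-μ} t) - B_k(λ e^{-μ} t)], the bracket being the derivative B_k'(λ e^{-μ} t) of the Bell polynomial. -/
open scoped BigOperators
open Filter MeasureTheory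

/-- Bell polynomial: `B n x = e^{-x} * Σ_{k=0}^∞ k^n x^k / k!` (n-th moment of Poisson(x)). -/
noncomputable def bell (n : ℕ) (x : ℝ) : ℝ :=
  Real.exp (-x) * ∑' k : ℕ, (k : ℝ) ^ n * x ^ k / (Nat.factorial k : ℝ)

/-- pmf of the iterated Poisson process:
`p_m(t) = e^{-λt(1-e^{-μ})} (μ^m/m!) B_m(λ t e^{-μ})`. -/
noncomputable def iterP (lam mu t : ℝ) (m : ℕ) : ℝ :=
  Real.exp (-lam * t * (1 - Real.exp (-mu))) * (mu ^ m / (Nat.factorial m : ℝ)) *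
    bell m (lam * t * Real.exp (-mu))

/-!
The bracket `B_{k+1}(x)/x - B_k(x)` equals `Σ_{j<k} C(k,j) B_j(x)` by the Bell recurrence
`B_{k+1}(x) = x Σ_{j≤k} C(k,j) B_j(x)`, which comes from shifting the index of the series and
expanding `(n+1)^k` binomially. Splitting `μ^k/k! · C(k,j) = μ^j/j! · μ^{k-j}/(k-j)!` then
matches the two sides term by term.
-/

open Finset

theorem summable_pow_mul_pow_div_factorial (j : ℕ) (x : ℝ) :
    Summable fun n : ℕ => (n : ℝ) ^ j * x ^ n / (n.factorial : ℝ) := by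
  refine .of_norm_bounded (Real.summable_pow_div_factorial (2 ^ j * |x|)) fun n => ?_
  have hn : (n : ℝ) ^ j ≤ ((2 : ℝ) ^ j) ^ n := by
    rw [← pow_mul, mul_comm, pow_mul]
    gcongr
    exact_mod_cast Nat.lt_two_pow_self.le
  rw [norm_div, norm_mul, norm_pow, norm_pow, Real.norm_natCast, Real.norm_natCast,
    Real.norm_eq_abs, mul_pow]
  gcongr

theorem succ_pow_succ_mul_pow_succ_div_factorial_succ (k n : ℕ) (x : ℝ) :
    ((n + 1 : ℕ) : ℝ) ^ (k + 1) * x ^ (n + 1) / ((n + 1).factorial : ℝ)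
      = ∑ j ∈ range (k + 1), (k.choose j : ℝ) * (x * ((n : ℝ) ^ j * x ^ n / n.factorial)) := by
  have hbinom : ((n : ℝ) + 1) ^ k = ∑ j ∈ range (k + 1), (n : ℝ) ^ j * k.choose j := by
    simpa using add_pow (n : ℝ) 1 k
  have hshift : ((n + 1 : ℕ) : ℝ) ^ (k + 1) * x ^ (n + 1) / ((n + 1).factorial : ℝ)
      = ((n : ℝ) + 1) ^ k * (x * (x ^ n / n.factorial)) := by
    push_cast [Nat.factorial_succ]
    field_simp
    ring
  rw [hshift, hbinom, sum_mul]
  exact sum_congr rfl fun j _ => by ring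

theorem bell_succ (k : ℕ) (x : ℝ) :
    bell (k + 1) x = x * ∑ j ∈ range (k + 1), (k.choose j : ℝ) * bell j x := by
  have hseries : ∑' n : ℕ, (n : ℝ) ^ (k + 1) * x ^ n / n.factorial
      = ∑ j ∈ range (k + 1), (k.choose j : ℝ) *
          (x * ∑' n : ℕ, (n : ℝ) ^ j * x ^ n / n.factorial) := by
    rw [(summable_pow_mul_pow_div_factorial (k + 1) x).tsum_eq_zero_add,
      tsum_congr (succ_pow_succ_mul_pow_succ_div_factorial_succ k · x),
      Summable.tsum_finsetSum fun j _ =>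
        ((summable_pow_mul_pow_div_factorial j x).mul_left x).mul_left _]
    simp [tsum_mul_left]
  simp only [bell, hseries, mul_sum]
  exact sum_congr rfl fun j _ => by ring

theorem bell_succ_div_sub_bell (k : ℕ) {x : ℝ} (hx : x ≠ 0) :
    bell (k + 1) x / x - bell k x = ∑ j ∈ range k, (k.choose j : ℝ) * bell j x := by
  rw [bell_succ, mul_div_cancel_left₀ _ hx, sum_range_succ, Nat.choose_self, Nat.cast_one,
    one_mul, add_sub_cancel_right]

theorem stmt17_general (lam mu t : ℝ) (hlam : 0 < lam) (ht : 0 < t)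
    (k : ℕ) :
    ∑ j ∈ Finset.range k, iterP lam mu t j *
        (lam * Real.exp (-mu) * mu ^ (k - j) / (Nat.factorial (k - j) : ℝ))
      = Real.exp (-mu) * mu ^ k / (Nat.factorial k : ℝ) * lam *
          Real.exp (-(lam * (1 - Real.exp (-mu))) * t) *
          (bell (k + 1) (lam * Real.exp (-mu) * t) / (lam * Real.exp (-mu) * t)
            - bell k (lam * Real.exp (-mu) * t)) := by
  have hx : lam * Real.exp (-mu) * t ≠ 0 := by positivity
  rw [bell_succ_div_sub_bell k hx, mul_sum]
  refine sum_congr rfl fun j hj => ?_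
  have hjk : j ≤ k := (mem_range.mp hj).le
  rw [iterP, mul_right_comm lam t, neg_mul, neg_mul, mul_right_comm lam t,
    Nat.cast_choose ℝ hjk, ← pow_mul_pow_sub mu hjk]
  field_simp

/-- first-hitting-time density of state `k` for the iterated Poisson process:
`Σ_{j=0}^{k-1} p_j(t) λ e^{-μ} μ^{k-j}/(k-j)!
  = (e^{-μ}μ^k/k!) λ e^{-λ(1-e^{-μ})t} [B_{k+1}(λe^{-μ}t)/(λe^{-μ}t) - B_k(λe^{-μ}t)]`. -/
theorem stmt17 (lam mu t : ℝ) (hlam : 0 < lam) (hmu : 0 < mu) (ht : 0 < t)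
    (k : ℕ) (hk : 1 ≤ k) :
    ∑ j ∈ Finset.range k, iterP lam mu t j *
        (lam * Real.exp (-mu) * mu ^ (k - j) / (Nat.factorial (k - j) : ℝ))
      = Real.exp (-mu) * mu ^ k / (Nat.factorial k : ℝ) * lam *
          Real.exp (-(lam * (1 - Real.exp (-mu))) * t) *
          (bell (k + 1) (lam * Real.exp (-mu) * t) / (lam * Real.exp (-mu) * t)
            - bell k (lam * Real.exp (-mu) * t)) :=
  stmt17_general lam mu t hlam ht k
end

section
/- For all λ > 0, μ > 0, every integer k ≥ 1 and every t ≥ 0, the distribution function of the first-hitting time of state k for the iterated Poisson process satisfies ∫_0^t h(τ) dτ = (μ^k/k!) · [ e^{-λ(1-e^{-μ})t} B_k(λ e^{-μ} t) + Σ_{j=0}^k S_2(k,j) γ(j+1, λ(1-e^{-μ})t)/(e^{μ}-1)^j ], where γ(a,z) = ∫_0^z τ^{a-1} e^{-τ} dτ is the lower incomplete gamma function. -/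
/-!
Dobinski's formula `B_n(x) = e^{-x} Σ_k k^n x^k/k!`, combined with
`k^n = Σ_j S(n,j) k(k-1)⋯(k-j+1)` and `Σ_k k(k-1)⋯(k-j+1) x^k/k! = x^j e^x`, shows that
`B_n(x) = Σ_j S(n,j) x^j` is a polynomial.
Put `a = λ(1-e^{-μ})`, `b = λe^{-μ}` and `E = e^μ - 1`, so that `a = bE`. Then
`d/ds γ(j+1, as)/E^j = a e^{-as} (bs)^j`, hence the incomplete-gamma sum has derivative
`a e^{-as} B_k(bs)`, which cancels the term coming from differentiating `e^{-as}` in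
`e^{-as} B_k(bs)`. So the right-hand side is an antiderivative of `h`, and it vanishes at `0`
because `B_k(0) = S(k,0) = 0` for `k ≥ 1`.
-/

open scoped BigOperators
open Filter MeasureTheory

/-- Stirling numbers of the second kind:
`S2 n k = (1/k!) Σ_{i=0}^k (-1)^i C(k,i) (k-i)^n`. -/
noncomputable def S2 (n k : ℕ) : ℝ :=
  (1 / (Nat.factorial k : ℝ)) * ∑ i ∈ Finset.range (k + 1),
    (-1 : ℝ) ^ i * (Nat.choose k i : ℝ) * ((k - i : ℕ) : ℝ) ^ n

/-- First-hitting-time density of state `k` for the iterated Poisson process: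
`h(t) = (e^{-μ}μ^k/k!) λ e^{-λ(1-e^{-μ})t} B_k'(λ e^{-μ} t)`. -/
noncomputable def hitDens (lam mu : ℝ) (k : ℕ) (t : ℝ) : ℝ :=
  Real.exp (-mu) * mu ^ k / (Nat.factorial k : ℝ) * lam *
    Real.exp (-(lam * (1 - Real.exp (-mu))) * t) *
    deriv (fun x => bell k x) (lam * Real.exp (-mu) * t)

/-- Lower incomplete gamma function `γ(a,z) = ∫_0^z τ^{a-1} e^{-τ} dτ`. -/
noncomputable def gammaLower (a z : ℝ) : ℝ :=
  ∫ τ in (0 : ℝ)..z, τ ^ (a - 1) * Real.exp (-τ)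

open Finset
open scoped Nat

namespace Nat

theorem descFactorial_succ_add_mul_descFactorial (k j : ℕ) :
    k.descFactorial (j + 1) + j * k.descFactorial j = k * k.descFactorial j := by
  rcases le_or_gt j k with h | h
  · rw [descFactorial_succ, ← add_mul, Nat.sub_add_cancel h]
  · simp [descFactorial_eq_zero_iff_lt.2 h]

theorem pow_eq_sum_stirlingSecond_mul_descFactorial (n k : ℕ) :
    k ^ n = ∑ j ∈ range (n + 1), stirlingSecond n j * k.descFactorial j := by
  induction n with
  | zero => simp
  | succ n ih =>
    have hshift :
        ∑ j ∈ range (n + 1), (j + 1) * stirlingSecond n (j + 1) * k.descFactorial (j + 1)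
        = ∑ j ∈ range (n + 1), j * stirlingSecond n j * k.descFactorial j := by
      rw [sum_range_succ, stirlingSecond_eq_zero_of_lt n.lt_succ_self, sum_range_succ' _ n]
      simp
    calc k ^ (n + 1)
        = ∑ j ∈ range (n + 1), stirlingSecond n j * k.descFactorial (j + 1)
            + ∑ j ∈ range (n + 1), j * stirlingSecond n j * k.descFactorial j := by
          rw [pow_succ, ih, sum_mul, ← sum_add_distrib]
          exact sum_congr rfl fun j _ => by
            rw [mul_assoc, mul_comm _ k, ← descFactorial_succ_add_mul_descFactorial]; ring
      _ = ∑ j ∈ range (n + 1), ((j + 1) * stirlingSecond n (j + 1) + stirlingSecond n j)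
            * k.descFactorial (j + 1) := by
          rw [← hshift, add_comm, ← sum_add_distrib]
          exact sum_congr rfl fun j _ => by ring
      _ = ∑ j ∈ range (n + 1 + 1), stirlingSecond (n + 1) j * k.descFactorial j := by
          rw [sum_range_succ' _ (n + 1)]
          simp [stirlingSecond_succ_succ]

end Nat

/-- `j! S(n, j)`: by inclusion–exclusion, the number of surjections from an `n`-set onto a
`j`-set. -/
noncomputable def surjCount (n j : ℕ) : ℝ :=
  ∑ i ∈ range (j + 1), (-1 : ℝ) ^ i * (j.choose i : ℝ) * ((j - i : ℕ) : ℝ) ^ n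

theorem surjCount_zero_succ (j : ℕ) : surjCount 0 (j + 1) = 0 := by
  have h := Int.alternating_sum_range_choose_of_ne (n := j + 1) j.succ_ne_zero
  simpa [surjCount] using congrArg (Int.cast : ℤ → ℝ) h

theorem surjCount_succ_zero (n : ℕ) : surjCount (n + 1) 0 = 0 := by
  simp [surjCount]

theorem surjCount_succ_succ (n j : ℕ) :
    surjCount (n + 1) (j + 1) = (j + 1) * (surjCount n (j + 1) + surjCount n j) := by
  have hchoose (i : ℕ) : ((j + 1).choose (i + 1) : ℝ) * (i + 1) = j.choose i * (j + 1) := by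
    exact_mod_cast (Nat.add_one_mul_choose_eq j i).symm.trans (mul_comm _ _)
  have hsplit : surjCount (n + 1) (j + 1) = (j + 1) * surjCount n (j + 1)
      - ∑ i ∈ range (j + 2),
          (-1 : ℝ) ^ i * i * ((j + 1).choose i : ℝ) * ((j + 1 - i : ℕ) : ℝ) ^ n := by
    rw [surjCount, surjCount, mul_sum, ← sum_sub_distrib]
    refine sum_congr rfl fun i hi => ?_
    rw [pow_succ, Nat.cast_sub (mem_range_succ_iff.1 hi)]
    push_cast
    ring
  have hshift : ∑ i ∈ range (j + 2),
      (-1 : ℝ) ^ i * i * ((j + 1).choose i : ℝ) * ((j + 1 - i : ℕ) : ℝ) ^ n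
      = -(j + 1) * surjCount n j := by
    rw [sum_range_succ', surjCount, mul_sum]
    simp only [CharP.cast_eq_zero, mul_zero, zero_mul, add_zero, Nat.add_sub_add_right]
    refine sum_congr rfl fun i _ => ?_
    push_cast
    linear_combination (-(-1 : ℝ) ^ i * ((j - i : ℕ) : ℝ) ^ n) * hchoose i
  rw [hsplit, hshift]
  ring

theorem surjCount_eq_factorial_mul_stirlingSecond (n j : ℕ) :
    surjCount n j = j ! * Nat.stirlingSecond n j := by
  induction n generalizing j with
  | zero =>
    cases j with
    | zero => simp [surjCount]
    | succ j => simp [surjCount_zero_succ]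
  | succ n ih =>
    cases j with
    | zero => simp [surjCount_succ_zero]
    | succ j =>
      rw [surjCount_succ_succ, ih, ih, Nat.stirlingSecond_succ_succ, Nat.factorial_succ]
      push_cast
      ring

theorem S2_eq_stirlingSecond (n j : ℕ) : S2 n j = Nat.stirlingSecond n j := by
  rw [S2, ← surjCount, surjCount_eq_factorial_mul_stirlingSecond]
  field_simp

theorem hasSum_descFactorial_mul_pow_div_factorial (j : ℕ) (x : ℝ) :
    HasSum (fun k : ℕ => (k.descFactorial j : ℝ) * x ^ k / k !) (x ^ j * Real.exp x) := by
  rw [← (add_left_injective j).hasSum_iff]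
  · rw [Real.exp_eq_exp_ℝ]
    refine ((NormedSpace.expSeries_div_hasSum_exp x).mul_left (x ^ j)).congr_fun fun m => ?_
    have h := Nat.factorial_mul_descFactorial (Nat.le_add_left j m)
    rw [Nat.add_sub_cancel] at h
    simp only [Function.comp_apply, pow_add, ← h]
    push_cast
    field_simp
  · intro k hk
    have hkj : k < j := by
      by_contra! h
      exact hk ⟨k - j, Nat.sub_add_cancel h⟩
    simp [Nat.descFactorial_eq_zero_iff_lt.2 hkj]

theorem bell_eq_sum_S2_mul_pow (n : ℕ) (x : ℝ) :
    bell n x = ∑ j ∈ range (n + 1), S2 n j * x ^ j := by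
  have h : HasSum (fun k : ℕ => (k : ℝ) ^ n * x ^ k / k !)
      (∑ j ∈ range (n + 1), S2 n j * (x ^ j * Real.exp x)) := by
    refine (hasSum_sum fun j _ =>
      (hasSum_descFactorial_mul_pow_div_factorial j x).mul_left (S2 n j)).congr_fun fun k => ?_
    rw [← Nat.cast_pow, Nat.pow_eq_sum_stirlingSecond_mul_descFactorial]
    push_cast
    rw [sum_mul, sum_div]
    exact sum_congr rfl fun j _ => by rw [S2_eq_stirlingSecond]; ring
  rw [bell, h.tsum_eq, mul_sum]
  exact sum_congr rfl fun j _ => by rw [Real.exp_neg]; field_simp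

theorem contDiff_bell (n : ℕ) {m : WithTop ℕ∞} : ContDiff ℝ m (bell n) := by
  rw [funext (bell_eq_sum_S2_mul_pow n)]
  fun_prop

theorem bell_apply_zero {n : ℕ} (hn : n ≠ 0) : bell n 0 = 0 := by
  rw [bell_eq_sum_S2_mul_pow, sum_range_succ', S2_eq_stirlingSecond]
  obtain ⟨n, rfl⟩ := Nat.exists_eq_succ_of_ne_zero hn
  simp

theorem gammaLower_apply_zero (a : ℝ) : gammaLower a 0 = 0 :=
  intervalIntegral.integral_same

theorem hasDerivAt_gammaLower_natCast_add_one (j : ℕ) (z : ℝ) :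
    HasDerivAt (gammaLower (j + 1)) (z ^ j * Real.exp (-z)) z := by
  have h : gammaLower (j + 1) = fun z => ∫ τ in (0 : ℝ)..z, τ ^ j * Real.exp (-τ) := by
    funext z
    simp [gammaLower]
  rw [h]
  exact (Continuous.integral_hasStrictDerivAt (by fun_prop) 0 z).hasDerivAt

theorem hasDerivAt_sum_S2_mul_gammaLower (n : ℕ) {a b E : ℝ} (h : a = b * E) (s : ℝ) :
    HasDerivAt (fun s => ∑ j ∈ range (n + 1), S2 n j * gammaLower (j + 1) (a * s) / E ^ j)
      (a * Real.exp (-(a * s)) * bell n (b * s)) s := by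
  have hterm (j : ℕ) : (a * s) ^ j * Real.exp (-(a * s)) * a / E ^ j
      = a * Real.exp (-(a * s)) * (b * s) ^ j := by
    rcases eq_or_ne E 0 with rfl | hE
    · simp [h]
    · rw [h]; field_simp; ring
  rw [bell_eq_sum_S2_mul_pow, mul_sum]
  refine HasDerivAt.fun_sum fun j _ => ?_
  have hj : HasDerivAt (fun s => gammaLower (j + 1) (a * s))
      ((a * s) ^ j * Real.exp (-(a * s)) * a) s :=
    ((hasDerivAt_gammaLower_natCast_add_one j (a * s)).comp s
      ((hasDerivAt_id s).const_mul a)).congr_deriv (by ring)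
  refine ((hj.const_mul (S2 n j)).div_const (E ^ j)).congr_deriv ?_
  rw [mul_div_assoc, hterm]
  ring

noncomputable def hitCDF (lam mu : ℝ) (k : ℕ) (t : ℝ) : ℝ :=
  mu ^ k / (Nat.factorial k : ℝ) *
    (Real.exp (-(lam * (1 - Real.exp (-mu))) * t) * bell k (lam * Real.exp (-mu) * t)
      + ∑ j ∈ Finset.range (k + 1),
          S2 k j * gammaLower ((j : ℝ) + 1) (lam * (1 - Real.exp (-mu)) * t)
            / (Real.exp mu - 1) ^ j)

theorem hasDerivAt_hitCDF (lam mu : ℝ) (k : ℕ) (t : ℝ) :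
    HasDerivAt (hitCDF lam mu k) (hitDens lam mu k t) t := by
  set a := lam * (1 - Real.exp (-mu)) with ha
  set b := lam * Real.exp (-mu) with hb
  have hab : a = b * (Real.exp mu - 1) := by
    rw [ha, hb, Real.exp_neg]
    field_simp [Real.exp_ne_zero]
  have hbell : HasDerivAt (bell k) (deriv (bell k) (b * t)) (b * t) :=
    ((contDiff_bell k (m := 1)).differentiable one_ne_zero _).hasDerivAt
  have hexp : HasDerivAt (fun s => Real.exp (-a * s) * bell k (b * s))
      (-a * Real.exp (-a * t) * bell k (b * t) + Real.exp (-a * t) * (deriv (bell k) (b * t) * b))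
      t := by
    have h1 := ((hasDerivAt_id t).const_mul (-a)).exp
    have h2 := hbell.comp t ((hasDerivAt_id t).const_mul b)
    exact (h1.mul h2).congr_deriv (by simp only [id, Function.comp_apply, mul_one]; ring)
  refine ((hexp.add (hasDerivAt_sum_S2_mul_gammaLower k hab t)).const_mul _).congr_deriv ?_
  rw [hitDens, neg_mul a t]
  ring

theorem continuous_hitDens (lam mu : ℝ) (k : ℕ) : Continuous (hitDens lam mu k) := by
  have := (contDiff_bell k (m := 1)).continuous_deriv le_rfl
  unfold hitDens
  fun_prop

theorem hitCDF_apply_zero (lam mu : ℝ) {k : ℕ} (hk : k ≠ 0) : hitCDF lam mu k 0 = 0 := by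
  simp [hitCDF, bell_apply_zero hk, gammaLower_apply_zero]

theorem stmt18_general (lam mu : ℝ)
    (k : ℕ) (hk : 1 ≤ k) (t : ℝ) :
    ∫ τ in (0 : ℝ)..t, hitDens lam mu k τ
      = mu ^ k / (Nat.factorial k : ℝ) *
          (Real.exp (-(lam * (1 - Real.exp (-mu))) * t) * bell k (lam * Real.exp (-mu) * t)
            + ∑ j ∈ Finset.range (k + 1),
                S2 k j * gammaLower ((j : ℝ) + 1) (lam * (1 - Real.exp (-mu)) * t)
                  / (Real.exp mu - 1) ^ j) := by
  rw [intervalIntegral.integral_eq_sub_of_hasDerivAt (fun s _ => hasDerivAt_hitCDF lam mu k s)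
    ((continuous_hitDens lam mu k).intervalIntegrable 0 t), hitCDF_apply_zero lam mu (by omega),
    sub_zero]
  rfl

/-- distribution function of the first-hitting time of state `k`:
`∫_0^t h(τ) dτ = (μ^k/k!) [e^{-λ(1-e^{-μ})t} B_k(λe^{-μ}t)
  + Σ_{j=0}^k S2(k,j) γ(j+1, λ(1-e^{-μ})t)/(e^μ-1)^j]`. -/
theorem stmt18 (lam mu : ℝ) (hlam : 0 < lam) (hmu : 0 < mu)
    (k : ℕ) (hk : 1 ≤ k) (t : ℝ) (ht : 0 ≤ t) :
    ∫ τ in (0 : ℝ)..t, hitDens lam mu k τ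
      = mu ^ k / (Nat.factorial k : ℝ) *
          (Real.exp (-(lam * (1 - Real.exp (-mu))) * t) * bell k (lam * Real.exp (-mu) * t)
            + ∑ j ∈ Finset.range (k + 1),
                S2 k j * gammaLower ((j : ℝ) + 1) (lam * (1 - Real.exp (-mu)) * t)
                  / (Real.exp mu - 1) ^ j) :=
  stmt18_general lam mu k hk t
end
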